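/- Let y be a nonzero real number. Then the series over natural numbers n whose n-th term is | 1/((n+1)·tan(|y|·ln((n+2)/(n+1)))) − sqrt( 1/n² + 1/(n²·tan(|y|·ln((n+1)/n))²) ) | (terms taken for n larger than a suitable index so that all denominators are nonzero) is summable. -/

import Mathlib

/-!
Write `a = |y|` and `F x = 1 / (x · tan (a · log ((x + 1) / x)))`, so that the `n`-th term is
`|F (n + 1) - √(1/n² + F n ²)|`. With `u = 1/x`, the expansions `log (1 + u) = u - u²/2 + O(u³)`
and `tan t = t + O(t³)` give `F x = a⁻¹ (1 + 1/(2x)) + O(1/x²)`, hence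
`F (n + 1) - F n = O(1/n²)`. Since `F n → a⁻¹ > 0`, also `√(1/n² + F n ²) - F n ≤ (1/n²) / F n`
is `O(1/n²)`. So the terms are `O(1/n²)`, and the whole series (`n₀ = 0`) is summable.
-/

open Filter

/-- The modulus of the increment `δ_n(z)` of the radial-convergence construction for
`z = 1 + i·y`:
`|δ_n| = |1/((n+1)·tan(|y|·ln((n+2)/(n+1)))) − √(1/n² + 1/(n²·tan(|y|·ln((n+1)/n))²))|`. -/
noncomputable def absDeltaLineOne (y : ℝ) (n : ℕ) : ℝ :=
  |1 / (((n : ℝ) + 1) * Real.tan (|y| * Real.log (((n : ℝ) + 2) / ((n : ℝ) + 1)))) -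
    Real.sqrt (1 / (n : ℝ) ^ 2 +
      1 / ((n : ℝ) ^ 2 * Real.tan (|y| * Real.log (((n : ℝ) + 1) / (n : ℝ))) ^ 2))|

open Real Asymptotics Topology

lemma abs_log_one_add_sub_le {u : ℝ} (hu0 : 0 ≤ u) (hu : u ≤ 1 / 2) :
    |log (1 + u) - (u - u ^ 2 / 2)| ≤ 2 * u ^ 3 := by
  have h := abs_log_sub_add_sum_range_le (x := -u)
    (by rw [abs_neg, abs_of_nonneg hu0]; linarith) 2
  simp only [Finset.sum_range_succ, Finset.sum_range_zero, abs_neg, abs_of_nonneg hu0,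
    sub_neg_eq_add] at h
  calc |log (1 + u) - (u - u ^ 2 / 2)| ≤ u ^ 3 / (1 - u) := by
        convert h using 2; norm_num; ring
    _ ≤ 2 * u ^ 3 := by
        rw [div_le_iff₀ (by linarith)]
        nlinarith [pow_nonneg hu0 3]

lemma tan_sub_self_mem_Icc {t : ℝ} (ht0 : 0 ≤ t) (ht1 : t ≤ 1) :
    tan t - t ∈ Set.Icc 0 (t ^ 3) := by
  have hcos : 1 - t ^ 2 / 2 ≤ cos t := one_sub_sq_div_two_le_cos
  have hcos0 : 0 < cos t := by nlinarith
  refine ⟨sub_nonneg.2 (le_tan ht0 (by linarith [pi_gt_three])), ?_⟩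
  rw [tan_eq_sin_div_cos, sub_le_iff_le_add, div_le_iff₀ hcos0]
  calc sin t ≤ t := sin_le ht0
    _ ≤ (t ^ 3 + t) * (1 - t ^ 2 / 2) := by
        nlinarith [mul_nonneg (pow_nonneg ht0 3) (show 0 ≤ 1 - t ^ 2 by nlinarith)]
    _ ≤ (t ^ 3 + t) * cos t := by gcongr

lemma abs_tan_log_one_add_sub_le {a u : ℝ} (ha : 0 ≤ a) (hu0 : 0 ≤ u) (hu : u ≤ 1 / 2)
    (hau : a * u ≤ 1) :
    |tan (a * log (1 + u)) - a * (u - u ^ 2 / 2)| ≤ (a ^ 3 + 2 * a) * u ^ 3 := by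
  set L := log (1 + u)
  have hL0 : 0 ≤ L := log_nonneg (by linarith)
  have hLu : L ≤ u := by linarith [log_le_sub_one_of_pos (show 0 < 1 + u by linarith)]
  have haL : a * L ≤ a * u := by gcongr
  obtain ⟨htan0, htan1⟩ := tan_sub_self_mem_Icc (mul_nonneg ha hL0) (haL.trans hau)
  have hcube : (a * L) ^ 3 ≤ a ^ 3 * u ^ 3 := by rw [← mul_pow]; gcongr
  have hlog := abs_le.1 (abs_log_one_add_sub_le hu0 hu)
  have := mul_le_mul_of_nonneg_left hlog.2 ha
  have := mul_le_mul_of_nonneg_left hlog.1 ha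
  rw [abs_le]; constructor <;> nlinarith

lemma abs_div_sub_one_add_half_le {u Q c : ℝ} (hu0 : 0 < u) (hu : u ≤ 1 / 2)
    (hc : c * u ^ 2 ≤ 1 / 4) (hQ : |Q - (u - u ^ 2 / 2)| ≤ c * u ^ 3) :
    |u / Q - (1 + u / 2)| ≤ (1 + 3 * c) * u ^ 2 := by
  obtain ⟨hQ1, hQ2⟩ := abs_le.1 hQ
  have hc0 : 0 ≤ c := (mul_nonneg_iff_of_pos_right (pow_pos hu0 3)).1 ((abs_nonneg _).trans hQ)
  have hcu : c * u ^ 3 ≤ u / 4 := by nlinarith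
  have hQu : u / 2 ≤ Q := by nlinarith
  have hQ0 : 0 < Q := by linarith
  rw [div_sub' hQ0.ne', abs_div, abs_of_pos hQ0, div_le_iff₀ hQ0, abs_le]
  have hw : 0 ≤ (1 + 3 * c) * u ^ 2 := by positivity
  have hu' : 0 ≤ 1 + u / 2 := by linarith
  constructor
  · nlinarith [mul_le_mul_of_nonneg_left hQu hw, mul_le_mul_of_nonneg_left hQ2 hu']
  · nlinarith [mul_le_mul_of_nonneg_left hQu hw, mul_le_mul_of_nonneg_left hQ1 hu']

lemma abs_sqrt_add_sq_sub_le {h B : ℝ} (hh : 0 ≤ h) (hB : 0 < B) :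
    |sqrt (h + B ^ 2) - B| ≤ h / B := by
  have hs : B ≤ sqrt (h + B ^ 2) := le_sqrt_of_sq_le (by linarith)
  have hsq := sq_sqrt (show 0 ≤ h + B ^ 2 by positivity)
  rw [abs_of_nonneg (sub_nonneg.2 hs), le_div_iff₀ hB]
  nlinarith

lemma isBigO_sqrt_add_sq_sub {α : Type*} {l : Filter α} {h B : α → ℝ} {b : ℝ} (hb : 0 < b)
    (hB : Tendsto B l (𝓝 b)) (hh : ∀ x, 0 ≤ h x) :
    (fun x => sqrt (h x + B x ^ 2) - B x) =O[l] h := by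
  refine .of_bound (2 / b) ?_
  filter_upwards [hB.eventually_const_lt (half_lt_self hb)] with x hx
  rw [Real.norm_eq_abs, Real.norm_of_nonneg (hh x)]
  calc |sqrt (h x + B x ^ 2) - B x| ≤ h x / B x := abs_sqrt_add_sq_sub_le (hh x) (by linarith)
    _ ≤ h x / (b / 2) := by gcongr; exact hh x
    _ = 2 / b * h x := by ring

noncomputable def cotLogRatio (a x : ℝ) : ℝ := 1 / (x * tan (a * log ((x + 1) / x)))

lemma abs_cotLogRatio_sub_le {a x : ℝ} (ha : 0 < a) (hx2 : 2 ≤ x) (hxa : a ≤ x)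
    (hxc : 4 * (a ^ 2 + 2) ≤ x) :
    |cotLogRatio a x - a⁻¹ * (1 + (2 * x)⁻¹)| ≤ a⁻¹ * (1 + 3 * (a ^ 2 + 2)) * (x ^ 2)⁻¹ := by
  obtain ⟨u, hu0, rfl⟩ : ∃ u, 0 < u ∧ x = 1 / u :=
    ⟨x⁻¹, inv_pos.2 (by linarith), by rw [one_div, inv_inv]⟩
  rw [le_div_iff₀ hu0] at hx2 hxa hxc
  have hcu : (a ^ 2 + 2) * u ^ 2 ≤ 1 / 4 := by nlinarith
  have hQ : |tan (a * log (1 + u)) / a - (u - u ^ 2 / 2)| ≤ (a ^ 2 + 2) * u ^ 3 := by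
    have h := abs_tan_log_one_add_sub_le ha.le hu0.le (by linarith) hxa
    rw [show (a ^ 3 + 2 * a) * u ^ 3 = a * ((a ^ 2 + 2) * u ^ 3) by ring,
      show tan (a * log (1 + u)) - a * (u - u ^ 2 / 2) =
        a * (tan (a * log (1 + u)) / a - (u - u ^ 2 / 2)) by field_simp,
      abs_mul, abs_of_pos ha] at h
    exact le_of_mul_le_mul_left h ha
  have hF : cotLogRatio a (1 / u) = a⁻¹ * (u / (tan (a * log (1 + u)) / a)) := by
    rw [cotLogRatio, show (1 / u + 1) / (1 / u) = 1 + u by field_simp]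
    field_simp
  have hG : (2 * (1 / u))⁻¹ = u / 2 := by field_simp
  rw [hF, hG, ← mul_sub, abs_mul, abs_of_pos (inv_pos.2 ha), mul_assoc, one_div_pow, one_div,
    inv_inv]
  gcongr
  exact abs_div_sub_one_add_half_le hu0 (by linarith) hcu hQ

section Asymptotics

variable {a : ℝ}

lemma isBigO_cotLogRatio_sub (ha : 0 < a) :
    (fun x => cotLogRatio a x - a⁻¹ * (1 + (2 * x)⁻¹)) =O[atTop] fun x => (x ^ 2)⁻¹ := by
  refine .of_bound (a⁻¹ * (1 + 3 * (a ^ 2 + 2))) ?_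
  filter_upwards [eventually_ge_atTop 2, eventually_ge_atTop a,
    eventually_ge_atTop (4 * (a ^ 2 + 2))] with x hx2 hxa hxc
  rw [Real.norm_eq_abs, Real.norm_of_nonneg (by positivity)]
  exact abs_cotLogRatio_sub_le ha hx2 hxa hxc

lemma tendsto_cotLogRatio (ha : 0 < a) : Tendsto (cotLogRatio a) atTop (𝓝 a⁻¹) := by
  have hG : Tendsto (fun x : ℝ => a⁻¹ * (1 + (2 * x)⁻¹)) atTop (𝓝 a⁻¹) := by
    simpa using (tendsto_inv_atTop_zero.comp
      (tendsto_id.const_mul_atTop two_pos)).const_add 1 |>.const_mul a⁻¹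
  have hsq : Tendsto (fun x : ℝ => (x ^ 2)⁻¹) atTop (𝓝 0) :=
    tendsto_inv_atTop_zero.comp (tendsto_pow_atTop two_ne_zero)
  simpa using ((isBigO_cotLogRatio_sub ha).trans_tendsto hsq).add hG

lemma isBigO_inv_add_one_sq :
    (fun x : ℝ => ((x + 1) ^ 2)⁻¹) =O[atTop] fun x => (x ^ 2)⁻¹ := by
  refine .of_bound' ?_
  filter_upwards [eventually_gt_atTop 0] with x hx
  rw [Real.norm_of_nonneg (by positivity), Real.norm_of_nonneg (by positivity)]
  gcongr
  linarith

lemma isBigO_cotLogRatio_add_one_sub (ha : 0 < a) :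
    (fun x => cotLogRatio a (x + 1) - cotLogRatio a x) =O[atTop] fun x => (x ^ 2)⁻¹ := by
  have hshift := ((isBigO_cotLogRatio_sub ha).comp_tendsto
    (tendsto_atTop_add_const_right atTop 1 tendsto_id)).trans isBigO_inv_add_one_sq
  have hstep : (fun x : ℝ => a⁻¹ * (1 + (2 * (x + 1))⁻¹) - a⁻¹ * (1 + (2 * x)⁻¹))
      =O[atTop] fun x => (x ^ 2)⁻¹ := by
    refine .of_bound (2 * a)⁻¹ ?_
    filter_upwards [eventually_gt_atTop 0] with x hx
    have e : a⁻¹ * (1 + (2 * (x + 1))⁻¹) - a⁻¹ * (1 + (2 * x)⁻¹) =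
        -((2 * a)⁻¹ * (x * (x + 1))⁻¹) := by
      field_simp; ring
    rw [e, norm_neg, Real.norm_of_nonneg (by positivity), Real.norm_of_nonneg (by positivity)]
    gcongr
    nlinarith
  refine ((hshift.add hstep).sub (isBigO_cotLogRatio_sub ha)).congr_left fun x => ?_
  simp only [Function.comp_apply, id]
  ring

end Asymptotics

lemma absDeltaLineOne_eq (y : ℝ) (n : ℕ) :
    absDeltaLineOne y n =
      |cotLogRatio |y| (n + 1) - sqrt (((n : ℝ) ^ 2)⁻¹ + cotLogRatio |y| n ^ 2)| := by
  simp only [absDeltaLineOne, cotLogRatio, one_div]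
  ring_nf

/-- For `y ≠ 0`, the series of the moduli `|δ_n|` (terms taken beyond a suitable index
so that all denominators are nonzero) is summable. -/
theorem absDeltaLineOne_summable (y : ℝ) (hy : y ≠ 0) :
    ∃ n₀ : ℕ, Summable (fun n : ℕ => absDeltaLineOne y (n + n₀)) := by
  have ha : 0 < |y| := abs_pos.2 hy
  have hΔ : (fun x => cotLogRatio |y| (x + 1) - sqrt ((x ^ 2)⁻¹ + cotLogRatio |y| x ^ 2))
      =O[atTop] fun x => (x ^ 2)⁻¹ :=
    ((isBigO_cotLogRatio_add_one_sub ha).sub (isBigO_sqrt_add_sq_sub (inv_pos.2 ha)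
      (tendsto_cotLogRatio ha) fun x => by positivity)).congr_left fun x => by ring
  refine ⟨0, summable_of_isBigO_nat (summable_nat_pow_inv.2 one_lt_two) ?_⟩
  refine (hΔ.comp_tendsto tendsto_natCast_atTop_atTop).norm_left.congr_left fun n => ?_
  simp [absDeltaLineOne_eq]
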